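/- Let f ∈ O and let g ∈ (f) + J(f). Let 𝔻 := ℂ[ε]/(ε²) be the ring of dual numbers, A := 𝔻[[x₁,…,xₙ]] (the formal power series ring over 𝔻, equivalently O ⊗_ℂ 𝔻), and F := f + ε·g ∈ A. Then the quotient A/((F) + (∂F/∂x₁, …, ∂F/∂xₙ)) is a flat 𝔻-module. (In deformation-theoretic terms: any trivial first-order infinitesimal deformation of a hypersurface X₀ = V(f) has flat relative Tjurina module T¹(X_D/D) over the double point D.) -/

import Mathlib

set_option synthInstance.maxHeartbeats 400000

/-- Formal partial derivative of a multivariate power series with respect to variable `i`. -/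
noncomputable def pd {n : ℕ} {R : Type*} [CommSemiring R] (i : Fin n)
    (f : MvPowerSeries (Fin n) R) : MvPowerSeries (Fin n) R :=
  fun m => (m i + 1) • f (m + Finsupp.single i 1)

/-- The Jacobian ideal `J(f) = (∂f/∂x₁, …, ∂f/∂xₙ)` of a power series `f`. -/
noncomputable def jacIdeal {n : ℕ} {R : Type*} [CommRing R] (f : MvPowerSeries (Fin n) R) :
    Ideal (MvPowerSeries (Fin n) R) :=
  Ideal.span (Set.range fun i : Fin n => pd i f)


/-!
Identify `A` with `O[ε]` and write `I = (F) + J(F)`. Over the dual numbers a module is flat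
as soon as every element killed by `ε` is divisible by `ε`. Let `ε a ∈ I`, `a = a₀ + ε a₁`, and
`ε a₀ = p F + ∑ qᵢ ∂ᵢF`. The `ε`-free part says that the operator `L = p₀ + ∑ qᵢ₀ ∂ᵢ` kills `f`;
the `ε`-part says that `a₀ ≡ L g` modulo `(f) + J(f)`. An operator `L` with `L f = 0` preserves
`(f) + J(f)`, because `L ∂ⱼ - ∂ⱼ L` is again of first order, so `a₀ ∈ (f) + J(f)`. Since
`f ≡ F` and `∂ᵢf ≡ ∂ᵢF` modulo `ε`, this gives `a₀ ∈ I + εA`, hence `a ∈ I + εA`.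
-/

open MvPowerSeries TrivSqZeroExt DualNumber TensorProduct

theorem Ideal.exists_eq_tmul_of_span_singleton {R M : Type*} [CommRing R] [AddCommGroup M]
    [Module R M] (t : R) (x : Ideal.span {t} ⊗[R] M) :
    ∃ m : M, x = (⟨t, Ideal.mem_span_singleton_self t⟩ : Ideal.span {t}) ⊗ₜ m := by
  induction x with
  | zero => exact ⟨0, (tmul_zero _ _).symm⟩
  | tmul y m =>
    obtain ⟨c, hc⟩ := Ideal.mem_span_singleton'.1 y.2
    refine ⟨c • m, ?_⟩
    rw [← smul_tmul]
    congr
    exact Subtype.ext (by simp [← hc])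
  | add x y hx hy =>
    obtain ⟨m₁, rfl⟩ := hx
    obtain ⟨m₂, rfl⟩ := hy
    exact ⟨m₁ + m₂, (tmul_add _ _ _).symm⟩

theorem Ideal.rTensor_span_singleton_subtype_injective {R M : Type*} [CommRing R]
    [AddCommGroup M] [Module R M] (t : R)
    (h : ∀ m : M, t • m = 0 →
      (⟨t, Ideal.mem_span_singleton_self t⟩ : Ideal.span {t}) ⊗ₜ[R] m = 0) :
    Function.Injective ((Ideal.span {t}).subtype.rTensor M) := by
  refine (injective_iff_map_eq_zero _).2 fun x hx => ?_
  obtain ⟨m, rfl⟩ := Ideal.exists_eq_tmul_of_span_singleton t x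
  refine h m ?_
  simpa using congrArg (TensorProduct.lid R M) hx

theorem DualNumber.flat_of_forall_eps_smul_eq_zero {K M : Type*} [Field K] [AddCommGroup M]
    [Module K[ε] M] (h : ∀ m : M, (ε : K[ε]) • m = 0 → ∃ m', m = (ε : K[ε]) • m') :
    Module.Flat K[ε] M := by
  rw [Module.Flat.iff_rTensor_injective']
  intro I
  obtain rfl | rfl | rfl := ideal_trichotomy I
  · rw [← Ideal.span_singleton_zero]
    exact Ideal.rTensor_span_singleton_subtype_injective 0 fun m _ => zero_tmul _ m
  · refine Ideal.rTensor_span_singleton_subtype_injective ε fun m hm => ?_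
    obtain ⟨m', rfl⟩ := h m hm
    have hεε : (ε : K[ε]) • (⟨ε, Ideal.mem_span_singleton_self ε⟩ : Ideal.span {(ε : K[ε])}) = 0 :=
      Subtype.ext eps_mul_eps
    rw [← smul_tmul, hεε, zero_tmul]
  · rw [← Ideal.span_singleton_one]
    refine Ideal.rTensor_span_singleton_subtype_injective 1 fun m hm => ?_
    rw [one_smul] at hm
    rw [hm, tmul_zero]

namespace MvPowerSeries

section CommSemiring

variable {σ R S : Type*} [CommSemiring R] [CommSemiring S]

theorem pderiv_comm (i j : σ) (f : MvPowerSeries σ R) :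
    pderiv R i (pderiv R j f) = pderiv R j (pderiv R i f) := by
  classical
  ext m
  simp only [coeff_pderiv, add_right_comm m (Finsupp.single i 1), mul_assoc]
  congr 1
  rcases eq_or_ne i j with rfl | hij
  · rfl
  · simp [hij, hij.symm, mul_comm]

theorem pderiv_map (φ : R →+* S) (i : σ) (f : MvPowerSeries σ R) :
    pderiv S i (map φ f) = map φ (pderiv R i f) := by
  ext m
  simp [coeff_pderiv, coeff_map]

noncomputable def firstOrderOp [Fintype σ] (p : MvPowerSeries σ R) (q : σ → MvPowerSeries σ R) :
    MvPowerSeries σ R →ₗ[R] MvPowerSeries σ R :=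
  LinearMap.mulLeft R p + ∑ i, LinearMap.mulLeft R (q i) ∘ₗ (pderiv R i).toLinearMap

variable [Fintype σ] (p : MvPowerSeries σ R) (q : σ → MvPowerSeries σ R)

theorem firstOrderOp_apply (h : MvPowerSeries σ R) :
    firstOrderOp p q h = p * h + ∑ i, q i * pderiv R i h := by
  simp [firstOrderOp]

theorem firstOrderOp_mul (a h : MvPowerSeries σ R) :
    firstOrderOp p q (a * h) = a * firstOrderOp p q h + h * ∑ i, q i * pderiv R i a := by
  simp only [firstOrderOp_apply, Derivation.leibniz, smul_eq_mul, mul_add, Finset.sum_add_distrib,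
    Finset.mul_sum, mul_left_comm (q _)]
  ring

theorem firstOrderOp_pderiv (j : σ) (h : MvPowerSeries σ R) :
    firstOrderOp p q (pderiv R j h) + firstOrderOp (pderiv R j p) (fun i => pderiv R j (q i)) h =
      pderiv R j (firstOrderOp p q h) := by
  simp only [firstOrderOp_apply, map_add, map_sum, Derivation.leibniz, smul_eq_mul, pderiv_comm j,
    Finset.sum_add_distrib, mul_comm (pderiv R _ h) (pderiv R j _)]
  ring

theorem map_firstOrderOp (φ : R →+* S) (h : MvPowerSeries σ R) :
    map φ (firstOrderOp p q h) = firstOrderOp (map φ p) (fun i => map φ (q i)) (map φ h) := by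
  simp [firstOrderOp_apply, pderiv_map]

end CommSemiring

variable {σ R : Type*} [CommRing R]

noncomputable def dualNumberEquiv : DualNumber (MvPowerSeries σ R) ≃+* MvPowerSeries σ R[ε] where
  toFun x := map (algebraMap R R[ε]) x.fst + C ε * map (algebraMap R R[ε]) x.snd
  invFun a := (fun m => (coeff m a).fst, fun m => (coeff m a).snd)
  left_inv x := by
    ext m <;> simp [coeff_C_mul, algebraMap_eq_inl] <;> rfl
  right_inv a := by
    ext m : 1
    ext <;> simp [coeff_C_mul, algebraMap_eq_inl] <;> rfl
  map_mul' x y := by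
    have hεε : (C ε * C ε : MvPowerSeries σ R[ε]) = 0 := by rw [← map_mul, eps_mul_eps, map_zero]
    simp only [fst_mul, DualNumber.snd_mul, map_add, map_mul]
    linear_combination -(map (algebraMap R R[ε]) x.snd * map (algebraMap R R[ε]) y.snd) * hεε
  map_add' x y := by
    simp only [fst_add, snd_add, map_add]
    ring

theorem dualNumberEquiv_apply (x : DualNumber (MvPowerSeries σ R)) :
    dualNumberEquiv x =
      map (algebraMap R R[ε]) x.fst + C ε * map (algebraMap R R[ε]) x.snd :=
  rfl

theorem dualNumberEquiv_eps : dualNumberEquiv (ε : DualNumber (MvPowerSeries σ R)) = C ε := by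
  simp [dualNumberEquiv_apply]

theorem pderiv_dualNumberEquiv (i : σ) (x : DualNumber (MvPowerSeries σ R)) :
    pderiv R[ε] i (dualNumberEquiv x) =
      dualNumberEquiv (inl (pderiv R i x.fst) + inr (pderiv R i x.snd)) := by
  simp [dualNumberEquiv_apply, Derivation.leibniz, pderiv_map]

end MvPowerSeries

theorem pd_eq_pderiv {n : ℕ} {R : Type*} [CommSemiring R] (i : Fin n)
    (f : MvPowerSeries (Fin n) R) : pd i f = pderiv R i f := by
  ext m
  rw [coeff_pderiv, mul_comm, ← Nat.cast_succ, ← nsmul_eq_mul]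
  rfl

section TjurinaIdeal

variable {n : ℕ} {R : Type*} [CommRing R]

noncomputable def tjurinaIdeal (f : MvPowerSeries (Fin n) R) : Ideal (MvPowerSeries (Fin n) R) :=
  Ideal.span {f} + jacIdeal f

variable {f : MvPowerSeries (Fin n) R}

theorem mem_tjurinaIdeal_iff {x : MvPowerSeries (Fin n) R} :
    x ∈ tjurinaIdeal f ↔ ∃ p q, firstOrderOp p q f = x := by
  simp only [tjurinaIdeal, Ideal.add_eq_sup, Submodule.mem_sup, Ideal.mem_span_singleton',
    jacIdeal, pd_eq_pderiv, Submodule.mem_span_range_iff_exists_fun, smul_eq_mul,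
    firstOrderOp_apply]
  constructor
  · rintro ⟨_, ⟨p, rfl⟩, _, ⟨q, rfl⟩, rfl⟩
    exact ⟨p, q, rfl⟩
  · rintro ⟨p, q, rfl⟩
    exact ⟨_, ⟨p, rfl⟩, _, ⟨q, rfl⟩, rfl⟩

theorem firstOrderOp_mem_tjurinaIdeal (p : MvPowerSeries (Fin n) R) (q) :
    firstOrderOp p q f ∈ tjurinaIdeal f :=
  mem_tjurinaIdeal_iff.2 ⟨p, q, rfl⟩

theorem self_mem_tjurinaIdeal : f ∈ tjurinaIdeal f :=
  Submodule.mem_sup_left (Ideal.mem_span_singleton_self f)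

theorem pderiv_mem_tjurinaIdeal (i : Fin n) : pderiv R i f ∈ tjurinaIdeal f :=
  Submodule.mem_sup_right (Ideal.subset_span ⟨i, pd_eq_pderiv i f⟩)

theorem firstOrderOp_mem_tjurinaIdeal_of_eq_zero {p : MvPowerSeries (Fin n) R} {q}
    (hf : firstOrderOp p q f = 0) {g : MvPowerSeries (Fin n) R} (hg : g ∈ tjurinaIdeal f) :
    firstOrderOp p q g ∈ tjurinaIdeal f := by
  obtain ⟨a, b, rfl⟩ := mem_tjurinaIdeal_iff.1 hg
  have hpderiv (j : Fin n) : firstOrderOp p q (pderiv R j f) ∈ tjurinaIdeal f := by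
    have hcomm := firstOrderOp_pderiv p q j f
    rw [hf, map_zero, add_eq_zero_iff_eq_neg] at hcomm
    exact hcomm ▸ neg_mem (firstOrderOp_mem_tjurinaIdeal _ _)
  rw [firstOrderOp_apply a b f]
  simp only [map_add, map_sum, firstOrderOp_mul, hf, mul_zero, zero_add]
  exact add_mem (Ideal.mul_mem_right _ _ self_mem_tjurinaIdeal)
    (Ideal.sum_mem _ fun j _ => add_mem (Ideal.mul_mem_left _ _ (hpderiv j))
      (Ideal.mul_mem_right _ _ (pderiv_mem_tjurinaIdeal j)))

variable {g : MvPowerSeries (Fin n) R}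

theorem mem_tjurinaIdeal_of_dualNumberEquiv_inr_mem (hg : g ∈ tjurinaIdeal f)
    {u : MvPowerSeries (Fin n) R}
    (hu : dualNumberEquiv (inr u) ∈ tjurinaIdeal (dualNumberEquiv (inl f + inr g))) :
    u ∈ tjurinaIdeal f := by
  obtain ⟨p, q, hpq⟩ := mem_tjurinaIdeal_iff.1 hu
  set P := dualNumberEquiv.symm p
  set Q := fun i => dualNumberEquiv.symm (q i)
  have hlift : firstOrderOp p q (dualNumberEquiv (inl f + inr g)) = dualNumberEquiv
      (P * (inl f + inr g) + ∑ i, Q i * (inl (pderiv R i f) + inr (pderiv R i g))) := by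
    simp [firstOrderOp_apply, pderiv_dualNumberEquiv, P, Q]
  rw [hlift, dualNumberEquiv.injective.eq_iff] at hpq
  have hsyz : firstOrderOp P.fst (fun i => (Q i).fst) f = 0 := by
    have hfst := congrArg fst hpq
    simp only [fst_add, fst_mul, fst_sum, fst_inl, fst_inr, add_zero] at hfst
    rwa [firstOrderOp_apply]
  have hu : firstOrderOp P.fst (fun i => (Q i).fst) g +
      firstOrderOp P.snd (fun i => (Q i).snd) f = u := by
    have hsnd := congrArg snd hpq
    simp only [snd_add, DualNumber.snd_mul, snd_sum, fst_add, snd_inl, snd_inr, fst_inl,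
      fst_inr, add_zero, zero_add] at hsnd
    rw [← hsnd]
    simp only [firstOrderOp_apply, Finset.sum_add_distrib]
    ring
  rw [← hu]
  exact add_mem (firstOrderOp_mem_tjurinaIdeal_of_eq_zero hsyz hg)
    (firstOrderOp_mem_tjurinaIdeal _ _)

theorem exists_sub_C_eps_mul_mem_tjurinaIdeal (hg : g ∈ tjurinaIdeal f)
    {a : MvPowerSeries (Fin n) R[ε]}
    (ha : C ε * a ∈ tjurinaIdeal (dualNumberEquiv (inl f + inr g))) :
    ∃ b, a - C ε * b ∈ tjurinaIdeal (dualNumberEquiv (inl f + inr g)) := by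
  obtain ⟨x, rfl⟩ := dualNumberEquiv.surjective a
  have hx : x.fst ∈ tjurinaIdeal f := by
    refine mem_tjurinaIdeal_of_dualNumberEquiv_inr_mem hg ?_
    convert ha using 1
    rw [← dualNumberEquiv_eps, ← map_mul]
    congr 1
    ext <;> simp
  obtain ⟨p, q, hpq⟩ := mem_tjurinaIdeal_iff.1 hx
  set φ := map (σ := Fin n) (algebraMap R R[ε])
  set L := firstOrderOp (φ p) (fun i => φ (q i))
  refine ⟨φ x.snd - L (φ g), ?_⟩
  have hL : dualNumberEquiv x - C ε * (φ x.snd - L (φ g)) =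
      L (dualNumberEquiv (inl f + inr g)) := by
    simp only [dualNumberEquiv_apply, fst_inl, fst_inr, snd_inl, snd_inr, map_zero, zero_add,
      ← hpq, map_firstOrderOp, ← smul_eq_C_mul, map_add, map_smul, φ, L]
    simp only [smul_eq_C_mul]
    ring
  rw [hL]
  exact firstOrderOp_mem_tjurinaIdeal _ _

end TjurinaIdeal

theorem trivial_first_order_deformation_flat_T1_general (n : ℕ)
    (f g : MvPowerSeries (Fin n) ℂ)
    (hg : g ∈ Ideal.span {f} + jacIdeal f)
    (F : MvPowerSeries (Fin n) (DualNumber ℂ))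
    (hF : F = MvPowerSeries.map (σ := Fin n) (algebraMap ℂ (DualNumber ℂ)) f +
      MvPowerSeries.C (σ := Fin n) (R := DualNumber ℂ) DualNumber.eps *
        MvPowerSeries.map (σ := Fin n) (algebraMap ℂ (DualNumber ℂ)) g) :
    Module.Flat (DualNumber ℂ)
      (MvPowerSeries (Fin n) (DualNumber ℂ) ⧸ (Ideal.span {F} + jacIdeal F)) := by
  obtain rfl : F = dualNumberEquiv (inl f + inr g) := by simp [hF, dualNumberEquiv_apply]
  set I : Ideal (MvPowerSeries (Fin n) ℂ[ε]) := tjurinaIdeal (dualNumberEquiv (inl f + inr g))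
  change Module.Flat ℂ[ε] (MvPowerSeries (Fin n) ℂ[ε] ⧸ I)
  have hsmul (b : MvPowerSeries (Fin n) ℂ[ε]) :
      (ε : ℂ[ε]) • Ideal.Quotient.mk I b = Ideal.Quotient.mk I (C ε * b) := by
    rw [← smul_eq_C_mul]
    rfl
  refine DualNumber.flat_of_forall_eps_smul_eq_zero fun m hm => ?_
  obtain ⟨a, rfl⟩ := Ideal.Quotient.mk_surjective m
  rw [hsmul, Ideal.Quotient.eq_zero_iff_mem] at hm
  obtain ⟨b, hb⟩ := exists_sub_C_eps_mul_mem_tjurinaIdeal hg hm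
  exact ⟨Ideal.Quotient.mk I b, by rwa [hsmul, Ideal.Quotient.mk_eq_mk_iff_sub_mem]⟩

/-- let `g ∈ (f) + J(f)`, let `𝔻 = ℂ[ε]` be the dual numbers,
`A = 𝔻[[x₁,…,xₙ]]` and `F = f + ε·g ∈ A`.  Then `A/((F) + (∂F/∂x₁,…,∂F/∂xₙ))` is a flat
`𝔻`-module: any trivial first-order infinitesimal deformation of the hypersurface
`X₀ = V(f)` has flat relative Tjurina module over the double point. -/
theorem trivial_first_order_deformation_flat_T1 (n : ℕ) (hn : 1 ≤ n)
    (f g : MvPowerSeries (Fin n) ℂ)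
    (hg : g ∈ Ideal.span {f} + jacIdeal f)
    (F : MvPowerSeries (Fin n) (DualNumber ℂ))
    (hF : F = MvPowerSeries.map (σ := Fin n) (algebraMap ℂ (DualNumber ℂ)) f +
      MvPowerSeries.C (σ := Fin n) (R := DualNumber ℂ) DualNumber.eps *
        MvPowerSeries.map (σ := Fin n) (algebraMap ℂ (DualNumber ℂ)) g) :
    Module.Flat (DualNumber ℂ)
      (MvPowerSeries (Fin n) (DualNumber ℂ) ⧸ (Ideal.span {F} + jacIdeal F)) :=
  trivial_first_order_deformation_flat_T1_general n f g hg F hF
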